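/- arXiv:2210.13435 — 4 statements merged into one kernel-verified Lean document; each statement's English description precedes it below -/
import Mathlib

section
/- (Donsker–Varadhan / contrastive representation) For a probability mass function μ on a finite type Ω and a fixed reference PMF ρ with full support, we have sup over functions f : Ω → ℝ of [E_{x~μ} f(x) − log E_{x~ρ} exp(f(x))] = D_KL(μ ‖ ρ), and the supremum is attained by f(x) = log(μ(x)/ρ(x)) on the support of μ. -/
/-!
For fixed `f`, write `ν_f = ρ * exp f / Z_f` for the tilt of `ρ` by `f`. Then
`D_KL(μ ‖ ρ) - (E_μ f - log Z_f) = D_KL(μ ‖ ν_f)`, which is nonnegative by Jensen's inequality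
for `log` (Gibbs' inequality). When `μ` lacks full support the supremum need not be attained,
but it is approached by `f = log (μ / ρ)` on the support of `μ` and `f = t → -∞` off it.
-/

open Finset Real Filter Topology

namespace DonskerVaradhan

variable {ι : Type*} [Fintype ι] {μ ν ρ : ι → ℝ}

lemma sum_filter_pos_mul (hμ : ∀ x, 0 ≤ μ x) (g : ι → ℝ) :
    ∑ x with 0 < μ x, μ x * g x = ∑ x, μ x * g x :=
  sum_filter_of_ne fun x _ hx => (hμ x).lt_of_ne (left_ne_zero_of_mul hx).symm

lemma sum_filter_pos (hμ : ∀ x, 0 ≤ μ x) : ∑ x with 0 < μ x, μ x = ∑ x, μ x := by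
  simpa using sum_filter_pos_mul hμ fun _ => 1

lemma sum_mul_log_div_nonneg (hμ : ∀ x, 0 ≤ μ x) (hμsum : ∑ x, μ x = 1)
    (hν : ∀ x, 0 < ν x) (hνsum : ∑ x, ν x ≤ 1) :
    0 ≤ ∑ x, μ x * log (μ x / ν x) := by
  have jensen := strictConcaveOn_log_Ioi.concaveOn.le_map_sum (t := univ.filter (0 < μ ·))
    (w := μ) (p := fun x => ν x / μ x) (fun x _ => hμ x) ((sum_filter_pos hμ).trans hμsum)
    (fun x hx => div_pos (hν x) (mem_filter.1 hx).2)
  have hsupp : ∑ x with 0 < μ x, μ x • (ν x / μ x) = ∑ x with 0 < μ x, ν x :=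
    sum_congr rfl fun x hx => by
      rw [smul_eq_mul, mul_div_cancel₀ _ (mem_filter.1 hx).2.ne']
  have hle : ∑ x with 0 < μ x, ν x ≤ 1 :=
    (sum_le_sum_of_subset_of_nonneg (filter_subset _ _) fun x _ _ => (hν x).le).trans hνsum
  rw [← sum_filter_pos_mul hμ, ← neg_nonpos, ← sum_neg_distrib]
  calc ∑ x with 0 < μ x, -(μ x * log (μ x / ν x))
      = ∑ x with 0 < μ x, μ x • log (ν x / μ x) :=
        sum_congr rfl fun x _ => by rw [smul_eq_mul, ← mul_neg, ← log_inv, inv_div]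
    _ ≤ log (∑ x with 0 < μ x, ν x) := hsupp ▸ jensen
    _ ≤ 0 := log_nonpos (sum_nonneg fun x _ => (hν x).le) hle

lemma sum_mul_sub_log_sum_mul_exp_le (hμ : ∀ x, 0 ≤ μ x) (hμsum : ∑ x, μ x = 1)
    (hρ : ∀ x, 0 < ρ x) (f : ι → ℝ) :
    ∑ x, μ x * f x - log (∑ x, ρ x * exp (f x)) ≤ ∑ x, μ x * log (μ x / ρ x) := by
  set Z := ∑ x, ρ x * exp (f x)
  have hZ : 0 < Z := sum_pos (fun x _ => mul_pos (hρ x) (exp_pos _))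
    (nonempty_of_sum_ne_zero (by rw [hμsum]; exact one_ne_zero))
  have gibbs := sum_mul_log_div_nonneg hμ hμsum (ν := fun x => ρ x * exp (f x) / Z)
    (fun x => div_pos (mul_pos (hρ x) (exp_pos _)) hZ)
    (by rw [← sum_div, div_self hZ.ne'])
  have tilt : ∀ x, μ x * log (μ x / (ρ x * exp (f x) / Z)) =
      μ x * log (μ x / ρ x) - μ x * f x + μ x * log Z := by
    intro x
    rcases (hμ x).eq_or_lt with h | h
    · simp [← h]
    have hρx := hρ x
    rw [show μ x / (ρ x * exp (f x) / Z) = μ x / ρ x * (Z / exp (f x)) by field_simp,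
      log_mul (by positivity) (by positivity), log_div hZ.ne' (exp_pos _).ne', log_exp]
    ring
  simp only [tilt, sum_add_distrib, sum_sub_distrib, ← sum_mul, hμsum, one_mul] at gibbs
  linarith

lemma sum_filter_pos_mul_exp_log_div (hρ : ∀ x, 0 < ρ x) :
    ∑ x with 0 < μ x, ρ x * exp (log (μ x / ρ x)) = ∑ x with 0 < μ x, μ x :=
  sum_congr rfl fun x hx => by
    rw [exp_log (div_pos (mem_filter.1 hx).2 (hρ x)), mul_div_cancel₀ _ (hρ x).ne']

variable (μ ρ) in
noncomputable def logRatioOr (t : ℝ) (x : ι) : ℝ := if 0 < μ x then log (μ x / ρ x) else t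

lemma sum_mul_logRatioOr (hμ : ∀ x, 0 ≤ μ x) (t : ℝ) :
    ∑ x, μ x * logRatioOr μ ρ t x = ∑ x, μ x * log (μ x / ρ x) := by
  rw [← sum_filter_pos_mul hμ, ← sum_filter_pos_mul hμ]
  exact sum_congr rfl fun x hx => by rw [logRatioOr, if_pos (mem_filter.1 hx).2]

lemma sum_mul_exp_logRatioOr (hμ : ∀ x, 0 ≤ μ x) (hρ : ∀ x, 0 < ρ x) (t : ℝ) :
    ∑ x, ρ x * exp (logRatioOr μ ρ t x) = ∑ x, μ x + (∑ x with ¬0 < μ x, ρ x) * exp t := by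
  simp only [logRatioOr, apply_ite exp, mul_ite, sum_ite, sum_filter_pos_mul_exp_log_div hρ,
    sum_filter_pos hμ, sum_mul]

lemma sum_mul_log_div_le_iSup (hμ : ∀ x, 0 ≤ μ x) (hμsum : ∑ x, μ x = 1)
    (hρ : ∀ x, 0 < ρ x) :
    ∑ x, μ x * log (μ x / ρ x) ≤
      ⨆ f : ι → ℝ, (∑ x, μ x * f x - log (∑ x, ρ x * exp (f x))) := by
  set K := ∑ x, μ x * log (μ x / ρ x)
  have hbdd : BddAbove
      (Set.range fun f : ι → ℝ => ∑ x, μ x * f x - log (∑ x, ρ x * exp (f x))) :=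
    ⟨K, Set.forall_mem_range.2 (sum_mul_sub_log_sum_mul_exp_le hμ hμsum hρ)⟩
  have hlim : Tendsto (fun t => K - log (1 + (∑ x with ¬0 < μ x, ρ x) * exp t)) atBot (𝓝 K) := by
    have h : Tendsto (fun t => 1 + (∑ x with ¬0 < μ x, ρ x) * exp t) atBot (𝓝 1) := by
      simpa using (tendsto_exp_atBot.const_mul _).const_add 1
    simpa using (h.log one_ne_zero).const_sub K
  refine le_of_tendsto' hlim fun t => ?_
  have := le_ciSup hbdd (logRatioOr μ ρ t)
  rwa [sum_mul_logRatioOr hμ, sum_mul_exp_logRatioOr hμ hρ, hμsum] at this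

end DonskerVaradhan

open DonskerVaradhan in
theorem donsker_varadhan_general
    {Ω : Type*} [Fintype Ω]
    (μ ρ : Ω → ℝ)
    (hμ : ∀ x, 0 ≤ μ x) (hμsum : ∑ x, μ x = 1)
    (hρ : ∀ x, 0 < ρ x) :
    (⨆ f : Ω → ℝ,
        ((∑ x, μ x * f x) - Real.log (∑ x, ρ x * Real.exp (f x))))
      = ∑ x, μ x * Real.log (μ x / ρ x) ∧
    ((∑ x, μ x * Real.log (μ x / ρ x)) -
        Real.log (∑ x ∈ Finset.univ.filter (fun x => 0 < μ x),
          ρ x * Real.exp (Real.log (μ x / ρ x))))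
      = ∑ x, μ x * Real.log (μ x / ρ x) := by
  refine ⟨le_antisymm ?_ (sum_mul_log_div_le_iSup hμ hμsum hρ), ?_⟩
  · exact ciSup_le (sum_mul_sub_log_sum_mul_exp_le hμ hμsum hρ)
  · rw [sum_filter_pos_mul_exp_log_div hρ, sum_filter_pos hμ, hμsum, log_one, sub_zero]

/-- Donsker–Varadhan: For PMFs `μ, ρ` on a finite nonempty type
with `ρ` of full support,
`⨆ f, (E_μ f − log E_ρ exp f) = D_KL(μ ‖ ρ)`, and the supremum is attained by
`f x = log (μ x / ρ x)` on the support of `μ` (i.e., with the log-partition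
computed over the support of `μ`). -/
theorem donsker_varadhan
    {Ω : Type*} [Fintype Ω] [Nonempty Ω]
    (μ ρ : Ω → ℝ)
    (hμ : ∀ x, 0 ≤ μ x) (hμsum : ∑ x, μ x = 1)
    (hρ : ∀ x, 0 < ρ x) (hρsum : ∑ x, ρ x = 1) :
    (⨆ f : Ω → ℝ,
        ((∑ x, μ x * f x) - Real.log (∑ x, ρ x * Real.exp (f x))))
      = ∑ x, μ x * Real.log (μ x / ρ x) ∧
    ((∑ x, μ x * Real.log (μ x / ρ x)) -
        Real.log (∑ x ∈ Finset.univ.filter (fun x => 0 < μ x),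
          ρ x * Real.exp (Real.log (μ x / ρ x))))
      = ∑ x, μ x * Real.log (μ x / ρ x) :=
  donsker_varadhan_general μ ρ hμ hμsum hρ
end

section
/- (Two-armed Bernoulli bandit inconsistency of RCSL) Consider a one-step environment with two actions a₁, a₂ where the reward of a₁ is Bernoulli(1−p) and the reward of a₂ is Bernoulli(p), and the data-collecting policy picks a₁ with probability p and a₂ with probability 1−p, for p ∈ (0, 1/2). Then the return-conditioned policy given reward 1, π(a | r = 1) computed by Bayes' rule from the joint distribution of (action, reward), satisfies π(a₁ | r=1) = π(a₂ | r=1) = 1/2, and its expected reward when deployed is 1/2 < 1 − p, the expected reward of always playing a₁. -/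
/-- Bernoulli bandit inconsistency of RCSL: with arms `a₁, a₂`
having rewards `Bern(1-p)` and `Bern(p)` and data policy picking `a₁` with
probability `p`, for `p ∈ (0, 1/2)`: the return-conditioned policy on reward 1
is uniform, `π(a₁|r=1) = π(a₂|r=1) = 1/2`; its deployed expected reward is
`1/2`, which is strictly less than `1 - p`, the expected reward of always
playing `a₁`. -/
theorem bernoulli_bandit_rcsl_inconsistent
    (p : ℝ) (hp0 : 0 < p) (hp1 : p < 1 / 2) :
    (p * (1 - p)) / (p * (1 - p) + (1 - p) * p) = 1 / 2 ∧
    ((1 - p) * p) / (p * (1 - p) + (1 - p) * p) = 1 / 2 ∧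
    (1 / 2 : ℝ) * (1 - p) + (1 / 2 : ℝ) * p = 1 / 2 ∧
    (1 / 2 : ℝ) < 1 - p := by
  have h : p * (1 - p) ≠ 0 := by nlinarith
  have h2 : p * (1 - p) + (1 - p) * p ≠ 0 := by nlinarith
  refine ⟨?_, ?_, by ring, by linarith⟩ <;>
  · rw [div_eq_iff h2]; ring
end

section
/- (Counter-example to support-based consistency) Consider a deterministic two-step environment with binary actions a₀, a₁ ∈ {0,1}, where both actions from the first state lead to the same second state. The four trajectories τ₀ = (0,0), τ₁ = (1,1), τ₂ = (0,1), τ₃ = (1,0) occur in the data with equal probability 1/4 each, and a deterministic labeling assigns z₀ to τ₀, τ₁ and z₁ to τ₂, τ₃. The Markov (state-conditioned, history-independent) policy π(a|state, z₀) derived by Bayes' rule assigns probability 1/2 to each action at both steps, and running this policy in the environment produces trajectory τ₂ with probability 1/4 > 0, even though P(τ₂ | z₀) = 0 in the data. -/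
/-- Counter-example to support-based consistency: trajectories
are pairs `(a₀, a₁) : Bool × Bool`, the data `D` is uniform (`1/4` each), and
the latent `z₀` labels exactly the trajectories with `a₀ = a₁`.  The Markov
policy conditioned on `z₀` is uniform at both steps; running it produces the
trajectory `τ₂ = (false, true)` with probability `1/4 > 0`, even though
`P_D(τ₂ | z₀) = 0`. -/
theorem markov_consistency_counterexample
    (D : Bool × Bool → ℝ) (hD : ∀ τ, D τ = 1 / 4) :
    -- Markov policy at step 0 conditioned on z₀ is uniform
    (∀ b : Bool,
      (∑ τ ∈ Finset.univ.filter (fun τ : Bool × Bool => τ.1 = b ∧ τ.1 = τ.2), D τ) /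
        (∑ τ ∈ Finset.univ.filter (fun τ : Bool × Bool => τ.1 = τ.2), D τ) = 1 / 2) ∧
    -- Markov policy at step 1 (conditioned only on the unique second state) is uniform
    (∀ b : Bool,
      (∑ τ ∈ Finset.univ.filter (fun τ : Bool × Bool => τ.2 = b ∧ τ.1 = τ.2), D τ) /
        (∑ τ ∈ Finset.univ.filter (fun τ : Bool × Bool => τ.1 = τ.2), D τ) = 1 / 2) ∧
    -- running the Markov policy yields τ₂ = (false, true) with probability 1/4 > 0
    ((1 / 2 : ℝ) * (1 / 2) = 1 / 4 ∧ (0 : ℝ) < 1 / 4) ∧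
    -- yet P_D(τ₂ | z₀) = 0 in the data
    ((if ((false, true) : Bool × Bool).1 = ((false, true) : Bool × Bool).2
        then D (false, true) else 0) /
      (∑ τ ∈ Finset.univ.filter (fun τ : Bool × Bool => τ.1 = τ.2), D τ) = 0) := by
  have h1 : (Finset.filter (fun τ : Bool × Bool => τ.1 = τ.2) Finset.univ).card = 2 := by decide
  have h2 : ∀ b, (Finset.filter (fun τ : Bool × Bool => τ.1 = b ∧ τ.1 = τ.2) Finset.univ).card = 1 := by decide
  have h3 : ∀ b, (Finset.filter (fun τ : Bool × Bool => τ.2 = b ∧ τ.1 = τ.2) Finset.univ).card = 1 := by decide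
  refine ⟨?_, ?_, ⟨by norm_num, by norm_num⟩, ?_⟩ <;>
    simp [Finset.sum_congr rfl (fun τ _ => hD τ), Finset.sum_const, h1, h2, h3] <;> norm_num
end

section
/- (Zero-probability propagation) In the setting of the two-step consistency theorem (finite types, MI constraints between environment stochasticity and z, Bayes-optimal policy π_z and environment T, R matching data conditionals), for every prefix (a₀, s₁): if P_D(a₀, s₁ | z) = 0 then the probability of observing prefix (a₀, s₁) when running π_z against the environment is also 0. -/
/-- Zero-probability propagation: in the two-step consistency
setting (`D` a joint PMF over `(a₀, s₁, a₁, z)`, `T(s₁|a₀) = P_D(s₁|a₀)`,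
`MI(s₁; z | a₀) = 0`, `π_z(a₀) = P_D(a₀|z)`), for every `z` with
`P_D(z) > 0` and every prefix `(a₀, s₁)`: if `P_D(a₀, s₁ | z) = 0` then the
probability `π_z(a₀) · T(s₁|a₀)` of observing that prefix under the policy is
also `0`. -/
theorem zero_probability_propagation
    {A S Z : Type*} [Fintype A] [Fintype S] [Fintype Z]
    (D : A → S → A → Z → ℝ)
    (hnn : ∀ a0 s1 a1 z, 0 ≤ D a0 s1 a1 z)
    (hsum : ∑ a0, ∑ s1, ∑ a1, ∑ z, D a0 s1 a1 z = 1)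
    -- MI(s₁; z | a₀) = 0 :
    (hMI : ∀ a0 z, 0 < ∑ s1, ∑ a1, D a0 s1 a1 z → ∀ s1,
      (∑ a1, D a0 s1 a1 z) / (∑ s1', ∑ a1, D a0 s1' a1 z) =
        (∑ a1, ∑ z', D a0 s1 a1 z') / (∑ s1', ∑ a1, ∑ z', D a0 s1' a1 z')) :
    ∀ z, 0 < ∑ a0, ∑ s1, ∑ a1, D a0 s1 a1 z →
      ∀ a0 s1,
        (∑ a1, D a0 s1 a1 z) / (∑ a0', ∑ s1', ∑ a1', D a0' s1' a1' z) = 0 →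
        ((∑ s1', ∑ a1', D a0 s1' a1' z) / (∑ a0', ∑ s1', ∑ a1', D a0' s1' a1' z)) *
          ((∑ a1', ∑ z', D a0 s1 a1' z') / (∑ s1', ∑ a1', ∑ z', D a0 s1' a1' z'))
          = 0 := by
  intro z hz a0 s1 h0
  by_cases hA : (∑ s1', ∑ a1', D a0 s1' a1' z) = 0
  · rw [hA, zero_div, zero_mul]
  · have hApos : 0 < ∑ s1', ∑ a1', D a0 s1' a1' z := by
      refine lt_of_le_of_ne ?_ (Ne.symm hA)
      exact Finset.sum_nonneg fun _ _ => Finset.sum_nonneg fun _ _ => hnn _ _ _ _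
    have hnum : (∑ a1, D a0 s1 a1 z) = 0 := by
      have := div_eq_zero_iff.mp h0
      rcases this with h | h
      · exact h
      · exact absurd h (ne_of_gt hz)
    have := hMI a0 z hApos s1
    rw [hnum, zero_div] at this
    rw [← this, mul_zero]
end
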